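/- If n ≥ 2, α₁ = α₂, and w̄ is a local minimizer of g(w) = (1/2)((1/2)‖w‖² − ν)² + (1/2)wᵀDw − ψᵀw, then w̄ is a global minimizer. -/

import Mathlib

/-! Write `λ = ½‖w‖² - ν`. Along a line, `t ↦ g (w + t • u)` is a quartic polynomial whose linear
coefficient is `⟪(D + λ) w - ψ, u⟫` and whose quadratic coefficient is
`½ (uᵀ (D + λ) u + ⟪w, u⟫²)`. At a local minimizer the first vanishes for every `u`, so
`ψ = (D + λ) w`, and the second is nonnegative; testing it on a `u ⟂ w` supported on the first two
coordinates, where `D` acts as `α₁`, gives `α₁ + λ ≥ 0`, hence `D + λ ⪰ 0` by monotonicity. Then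
`g v - g w = ½ (v - w)ᵀ (D + λ) (v - w) + ⅛ (‖v‖² - ‖w‖²)² ≥ 0`. -/

open Finset Filter Topology

theorem IsLocalMin.quartic_coeffs {a b c d e : ℝ}
    (h : IsLocalMin (fun t : ℝ => a + b * t + c * t ^ 2 + d * t ^ 3 + e * t ^ 4) 0) :
    b = 0 ∧ 0 ≤ c := by
  have hderiv : HasDerivAt (fun t : ℝ => a + b * t + c * t ^ 2 + d * t ^ 3 + e * t ^ 4)
      (b * 1 + c * (2 * 0 ^ 1) + d * (3 * 0 ^ 2) + e * (4 * 0 ^ 3)) 0 :=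
    (((((hasDerivAt_id 0).const_mul b).const_add a).add ((hasDerivAt_pow 2 0).const_mul c)).add
      ((hasDerivAt_pow 3 0).const_mul d)).add ((hasDerivAt_pow 4 0).const_mul e)
  obtain rfl : b = 0 := by simpa using h.hasDerivAt_eq_zero hderiv
  refine ⟨rfl, ?_⟩
  have hlim : Tendsto (fun t : ℝ => c + d * t + e * t ^ 2) (𝓝[≠] 0) (𝓝 c) :=
    tendsto_nhdsWithin_of_tendsto_nhds (by simpa using (by fun_prop :
      Continuous fun t : ℝ => c + d * t + e * t ^ 2).tendsto 0)
  refine ge_of_tendsto hlim ?_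
  filter_upwards [h.filter_mono nhdsWithin_le_nhds, self_mem_nhdsWithin] with t ht (ht0 : t ≠ 0)
  have ht2 : 0 < t ^ 2 := by positivity
  have : 0 ≤ t ^ 2 * (c + d * t + e * t ^ 2) := by simp at ht; linear_combination ht
  exact nonneg_of_mul_nonneg_right this ht2

theorem nonneg_of_forall_mul_add_sq_nonneg {c x y : ℝ}
    (h : ∀ a b : ℝ, 0 ≤ c * (a ^ 2 + b ^ 2) + (a * x + b * y) ^ 2) : 0 ≤ c := by
  nlinarith [h 1 0, h y (-x)]

variable {ι : Type*} [Fintype ι]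

noncomputable def quarticObjective (α ψ : ι → ℝ) (ν : ℝ) (w : ι → ℝ) : ℝ :=
  (1/2) * ((1/2) * ∑ i, w i ^ 2 - ν) ^ 2 + (1/2) * ∑ i, α i * w i ^ 2 - ∑ i, ψ i * w i

theorem quarticObjective_add_smul (α ψ : ι → ℝ) (ν : ℝ) (w u : ι → ℝ) (t : ℝ) :
    quarticObjective α ψ ν (w + t • u) =
      quarticObjective α ψ ν w
      + (∑ i, (((1/2) * ∑ j, w j ^ 2 - ν + α i) * w i - ψ i) * u i) * t
      + (1/2) * (∑ i, ((1/2) * ∑ j, w j ^ 2 - ν + α i) * u i ^ 2 + (∑ i, w i * u i) ^ 2) * t ^ 2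
      + (1/2) * (∑ i, w i * u i) * (∑ i, u i ^ 2) * t ^ 3
      + (1/8) * (∑ i, u i ^ 2) ^ 2 * t ^ 4 := by
  set μ := (1/2) * ∑ j, w j ^ 2 - ν
  have h₁ : ∑ i, (w i + t * u i) ^ 2
      = ∑ i, w i ^ 2 + 2 * t * ∑ i, w i * u i + t ^ 2 * ∑ i, u i ^ 2 := by
    simp only [mul_sum, ← sum_add_distrib]; exact sum_congr rfl fun i _ => by ring
  have h₂ : ∑ i, α i * (w i + t * u i) ^ 2
      = ∑ i, α i * w i ^ 2 + 2 * t * ∑ i, α i * w i * u i + t ^ 2 * ∑ i, α i * u i ^ 2 := by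
    simp only [mul_sum, ← sum_add_distrib]; exact sum_congr rfl fun i _ => by ring
  have h₃ : ∑ i, ψ i * (w i + t * u i) = ∑ i, ψ i * w i + t * ∑ i, ψ i * u i := by
    simp only [mul_sum, ← sum_add_distrib]; exact sum_congr rfl fun i _ => by ring
  have h₄ : ∑ i, ((μ + α i) * w i - ψ i) * u i
      = μ * ∑ i, w i * u i + ∑ i, α i * w i * u i - ∑ i, ψ i * u i := by
    simp only [mul_sum, ← sum_add_distrib, ← sum_sub_distrib]; exact sum_congr rfl fun i _ => by ring
  have h₅ : ∑ i, (μ + α i) * u i ^ 2 = μ * ∑ i, u i ^ 2 + ∑ i, α i * u i ^ 2 := by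
    simp only [mul_sum, ← sum_add_distrib]; exact sum_congr rfl fun i _ => by ring
  simp only [quarticObjective, Pi.add_apply, Pi.smul_apply, smul_eq_mul, h₁, h₂, h₃, h₄, h₅]
  ring

variable {α ψ : ι → ℝ} {ν : ℝ} {w : ι → ℝ}

theorem IsLocalMin.quarticObjective_first_and_second_order (h : IsLocalMin (quarticObjective α ψ ν) w)
    (u : ι → ℝ) :
    ∑ i, (((1/2) * ∑ j, w j ^ 2 - ν + α i) * w i - ψ i) * u i = 0 ∧
      0 ≤ ∑ i, ((1/2) * ∑ j, w j ^ 2 - ν + α i) * u i ^ 2 + (∑ i, w i * u i) ^ 2 := by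
  have hline : IsLocalMin (fun t : ℝ => quarticObjective α ψ ν (w + t • u)) 0 :=
    IsLocalMin.comp_continuous (f := quarticObjective α ψ ν) (g := fun t : ℝ => w + t • u)
      (b := 0) (by simpa using h) (by fun_prop)
  simp only [quarticObjective_add_smul] at hline
  obtain ⟨hb, hc⟩ := hline.quartic_coeffs
  exact ⟨hb, by linarith⟩

theorem IsLocalMin.quarticObjective_stationary (h : IsLocalMin (quarticObjective α ψ ν) w)
    (i : ι) : ψ i = ((1/2) * ∑ j, w j ^ 2 - ν + α i) * w i := by
  have := (h.quarticObjective_first_and_second_order fun i => ((1/2) * ∑ j, w j ^ 2 - ν + α i) * w i - ψ i).1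
  rw [sum_mul_self_eq_zero_iff] at this
  linarith [this i (mem_univ i)]

theorem IsLocalMin.quarticObjective_shift_nonneg (h : IsLocalMin (quarticObjective α ψ ν) w)
    {i j : ι} (hij : i ≠ j) (hα : α i = α j) : 0 ≤ (1/2) * ∑ k, w k ^ 2 - ν + α i := by
  classical
  refine nonneg_of_forall_mul_add_sq_nonneg (x := w i) (y := w j) fun a b => ?_
  set u : ι → ℝ := Pi.single i a + Pi.single j b
  have hu : ∀ k, k ≠ i ∧ k ≠ j → u k = 0 := fun k hk => by simp [u, hk.1, hk.2]
  have hui : u i = a := by simp [u, hij.symm]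
  have huj : u j = b := by simp [u, hij]
  have hquad : ∑ k, ((1/2) * ∑ l, w l ^ 2 - ν + α k) * u k ^ 2
      = ((1/2) * ∑ l, w l ^ 2 - ν + α i) * (a ^ 2 + b ^ 2) := by
    rw [Fintype.sum_eq_add i j hij fun k hk => by simp [hu k hk], hui, huj, ← hα]; ring
  have hlin : ∑ k, w k * u k = a * w i + b * w j := by
    rw [Fintype.sum_eq_add i j hij fun k hk => by simp [hu k hk], hui, huj]; ring
  have := (h.quarticObjective_first_and_second_order u).2
  rwa [hquad, hlin] at this

theorem quarticObjective_le_of_stationary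
    (hψ : ∀ i, ψ i = ((1/2) * ∑ j, w j ^ 2 - ν + α i) * w i)
    (hpos : ∀ i, 0 ≤ (1/2) * ∑ j, w j ^ 2 - ν + α i) (v : ι → ℝ) :
    quarticObjective α ψ ν w ≤ quarticObjective α ψ ν v := by
  have hexp := quarticObjective_add_smul α ψ ν w (v - w) 1
  rw [one_smul, add_sub_cancel] at hexp
  have hgrad : ∑ i, (((1/2) * ∑ j, w j ^ 2 - ν + α i) * w i - ψ i) * (v - w) i = 0 :=
    sum_eq_zero fun i _ => by rw [hψ i, sub_self, zero_mul]
  have hquad : 0 ≤ ∑ i, ((1/2) * ∑ j, w j ^ 2 - ν + α i) * (v - w) i ^ 2 :=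
    sum_nonneg fun i _ => mul_nonneg (hpos i) (sq_nonneg _)
  -- at `t = 1` the cubic and quartic terms complete `⟪w, u⟫²` to `(⟪w, u⟫ + ‖u‖² / 2) ^ 2`
  nlinarith [sq_nonneg (∑ i, w i * (v - w) i + (1/2) * ∑ i, (v - w) i ^ 2)]

theorem stmt6 {n : ℕ} (hn : 2 ≤ n) (α ψ : Fin n → ℝ) (hα : Monotone α) (ν : ℝ)
    (h12 : α ⟨0, by omega⟩ = α ⟨1, hn⟩)
    (g : (Fin n → ℝ) → ℝ)
    (hg : ∀ w, g w = (1/2) * ((1/2) * ∑ i, (w i)^2 - ν)^2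
        + (1/2) * ∑ i, α i * (w i)^2 - ∑ i, ψ i * w i)
    (w : Fin n → ℝ) (hmin : IsLocalMin g w) :
    ∀ v : Fin n → ℝ, g w ≤ g v := by
  obtain rfl : g = quarticObjective α ψ ν := funext hg
  have h₀ := hmin.quarticObjective_shift_nonneg (by simp [Fin.ext_iff]) h12
  exact quarticObjective_le_of_stationary hmin.quarticObjective_stationary
    fun i => h₀.trans (by gcongr; exact hα (Nat.zero_le _))
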